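/- arXiv:1007.4638 — 7 statements merged into one kernel-verified Lean document; each statement's English description precedes it below -/
import Mathlib

section
/- In a cloven weak factorisation system, the class L of morphisms admitting a cloven L-map structure and the class R of morphisms admitting a cloven R-map structure form a weak factorisation system: both classes are closed under retracts in the arrow category, every morphism f factors as f = ρ_f ∘ λ_f with λ_f ∈ L and ρ_f ∈ R, and every f ∈ L has the left lifting property with respect to every g ∈ R. -/
open CategoryTheory

universe v u

/-- A cloven weak factorisation system: factorisations `f = ρ_f ∘ λ_f`, functorial fillers
`P(h,k)` for commutative squares, a map `σ_f` exhibiting each `λ_f` as a cloven L-map, and a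
map `π_f` exhibiting each `ρ_f` as a cloven R-map. -/
structure ClovenWFS (E : Type u) [Category.{v} E] where
  P : ∀ {X Y : E}, (X ⟶ Y) → E
  lam : ∀ {X Y : E} (f : X ⟶ Y), X ⟶ P f
  rho : ∀ {X Y : E} (f : X ⟶ Y), P f ⟶ Y
  fac : ∀ {X Y : E} (f : X ⟶ Y), lam f ≫ rho f = f
  fill : ∀ {U V X Y : E} (f : U ⟶ V) (g : X ⟶ Y) (h : U ⟶ X) (k : V ⟶ Y),
    h ≫ g = f ≫ k → (P f ⟶ P g)
  fill_lam : ∀ {U V X Y : E} (f : U ⟶ V) (g : X ⟶ Y) (h : U ⟶ X) (k : V ⟶ Y)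
    (w : h ≫ g = f ≫ k), lam f ≫ fill f g h k w = h ≫ lam g
  fill_rho : ∀ {U V X Y : E} (f : U ⟶ V) (g : X ⟶ Y) (h : U ⟶ X) (k : V ⟶ Y)
    (w : h ≫ g = f ≫ k), fill f g h k w ≫ rho g = rho f ≫ k
  fill_id : ∀ {X Y : E} (f : X ⟶ Y), fill f f (𝟙 X) (𝟙 Y) (by simp) = 𝟙 (P f)
  fill_comp : ∀ {U V X Y X' Y' : E} (f : U ⟶ V) (g : X ⟶ Y) (g' : X' ⟶ Y')
    (h : U ⟶ X) (k : V ⟶ Y) (h' : X ⟶ X') (k' : Y ⟶ Y')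
    (w : h ≫ g = f ≫ k) (w' : h' ≫ g' = g ≫ k'),
    fill f g' (h ≫ h') (k ≫ k')
      (by rw [Category.assoc, w', ← Category.assoc, w, Category.assoc]) =
    fill f g h k w ≫ fill g g' h' k' w'
  sigma : ∀ {X Y : E} (f : X ⟶ Y), P f ⟶ P (lam f)
  sigma_lam : ∀ {X Y : E} (f : X ⟶ Y), lam f ≫ sigma f = lam (lam f)
  sigma_rho : ∀ {X Y : E} (f : X ⟶ Y), sigma f ≫ rho (lam f) = 𝟙 (P f)
  pi : ∀ {X Y : E} (f : X ⟶ Y), P (rho f) ⟶ P f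
  pi_lam : ∀ {X Y : E} (f : X ⟶ Y), lam (rho f) ≫ pi f = 𝟙 (P f)
  pi_rho : ∀ {X Y : E} (f : X ⟶ Y), pi f ≫ rho f = rho (rho f)

variable {E : Type u} [Category.{v} E] (C : ClovenWFS E)

/-- `f` admits a cloven L-map structure. -/
def InL {X Y : E} (f : X ⟶ Y) : Prop :=
  ∃ s : Y ⟶ C.P f, f ≫ s = C.lam f ∧ s ≫ C.rho f = 𝟙 Y

/-- `g` admits a cloven R-map structure. -/
def InR {X Y : E} (g : X ⟶ Y) : Prop :=
  ∃ p : C.P g ⟶ X, C.lam g ≫ p = 𝟙 X ∧ p ≫ g = C.rho g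

/-- `a` is a retract of `b` in the arrow category. -/
def IsRetractArrow (a b : Arrow E) : Prop :=
  ∃ (i : a ⟶ b) (r : b ⟶ a), i ≫ r = 𝟙 a

/-- the classes of cloven L-maps and cloven R-maps of a cloven w.f.s. form a
weak factorisation system. -/
theorem cloven_wfs_is_wfs :
    -- both classes are closed under retracts in the arrow category
    (∀ a b : Arrow E, IsRetractArrow a b → InL C b.hom → InL C a.hom) ∧
    (∀ a b : Arrow E, IsRetractArrow a b → InR C b.hom → InR C a.hom) ∧
    -- every morphism factors as an L-map followed by an R-map
    (∀ {X Y : E} (f : X ⟶ Y),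
      InL C (C.lam f) ∧ InR C (C.rho f) ∧ C.lam f ≫ C.rho f = f) ∧
    -- weak orthogonality: every L-map lifts against every R-map
    (∀ {U V X Y : E} (f : U ⟶ V) (g : X ⟶ Y), InL C f → InR C g →
      ∀ (h : U ⟶ X) (k : V ⟶ Y), h ≫ g = f ≫ k →
        ∃ j : V ⟶ X, f ≫ j = h ∧ j ≫ g = k) := by
  refine ⟨?_, ?_, ?_, ?_⟩
  · rintro a b ⟨i, r, hir⟩ ⟨s, hs1, hs2⟩
    have hi1 : i.left ≫ r.left = 𝟙 a.left := by
      have := congrArg CommaMorphism.left hir; simpa using this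
    have hi2 : i.right ≫ r.right = 𝟙 a.right := by
      have := congrArg CommaMorphism.right hir; simpa using this
    have wr : r.left ≫ a.hom = b.hom ≫ r.right := Arrow.w r
    refine ⟨i.right ≫ s ≫ C.fill b.hom a.hom r.left r.right wr, ?_, ?_⟩
    · have wi : i.left ≫ b.hom = a.hom ≫ i.right := Arrow.w i
      rw [← Category.assoc, ← Category.assoc, ← wi, Category.assoc,
        Category.assoc, ← Category.assoc _ s, hs1, C.fill_lam,
        ← Category.assoc, hi1]
      simp
    · rw [Category.assoc, Category.assoc, C.fill_rho, ← Category.assoc _ _ r.right,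
        hs2]
      simp [hi2]
  · rintro a b ⟨i, r, hir⟩ ⟨p, hp1, hp2⟩
    have hi1 : i.left ≫ r.left = 𝟙 a.left := by
      have := congrArg CommaMorphism.left hir; simpa using this
    have hi2 : i.right ≫ r.right = 𝟙 a.right := by
      have := congrArg CommaMorphism.right hir; simpa using this
    have wi : i.left ≫ b.hom = a.hom ≫ i.right := Arrow.w i
    refine ⟨C.fill a.hom b.hom i.left i.right wi ≫ p ≫ r.left, ?_, ?_⟩
    · rw [← Category.assoc, C.fill_lam, Category.assoc, ← Category.assoc _ p,
        hp1]
      simp [hi1]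
    · have wr : r.left ≫ a.hom = b.hom ≫ r.right := Arrow.w r
      rw [Category.assoc, Category.assoc, wr, ← Category.assoc p, hp2,
        ← Category.assoc, C.fill_rho, Category.assoc, hi2]
      simp
  · intro X Y f
    exact ⟨⟨C.sigma f, C.sigma_lam f, C.sigma_rho f⟩,
      ⟨C.pi f, C.pi_lam f, C.pi_rho f⟩, C.fac f⟩
  · rintro U V X Y f g ⟨s, hs1, hs2⟩ ⟨p, hp1, hp2⟩ h k w
    refine ⟨s ≫ C.fill f g h k w ≫ p, ?_, ?_⟩
    · rw [← Category.assoc, hs1, ← Category.assoc, C.fill_lam,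
        Category.assoc, hp1, Category.comp_id]
    · rw [Category.assoc, Category.assoc, hp2, C.fill_rho,
        ← Category.assoc, hs2, Category.id_comp]
end

section
/- Given an n-dimensional traversal θ : {1,…,k} → [n] × {+,−} and an order-preserving map α : [m] → [n], there exists a unique commutative pullback square of sets with top map ψ : {1,…,ℓ} → [m] × {+,−}, left map ᾱ : {1,…,ℓ} → {1,…,k}, right map α × id_{±}, and bottom map θ, such that ᾱ is order-preserving and for each i ∈ {1,…,k}, the restriction of ψ to the fibre ᾱ⁻¹(i) is order-reversing if θ(i) has sign + and order-preserving if θ(i) has sign −. (Here ψ is ordered via its first component.) -/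
/-- An `n`-dimensional traversal of length `k` is a function
`θ : {1,…,k} → [n] × {+,−}`, encoded as `Fin k → Fin (n+1) × Bool`
(with `true` standing for `+`). -/
abbrev Traversal (n k : ℕ) := Fin k → Fin (n + 1) × Bool

/-- The data and conditions for the pullback square defining the action `θ · α`:
`ψ` is the top map, `ā` the left map; the square commutes over `α × id`, is a pullback,
`ā` is order-preserving, and on each fibre of `ā` the first component of `ψ` is
order-reversing (for a `+` step) resp. order-preserving (for a `−` step). -/
def IsTraversalPullback {n k m : ℕ} (θ : Traversal n k) (α : Fin (m + 1) →o Fin (n + 1))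
    (ℓ : ℕ) (ψ : Traversal m ℓ) (abar : Fin ℓ → Fin k) : Prop :=
  -- the square commutes
  (∀ j : Fin ℓ, (α (ψ j).1, (ψ j).2) = θ (abar j)) ∧
  -- the square is a pullback: the induced map to the fibre product is a bijection
  (∀ (i : Fin k) (x : Fin (m + 1)) (s : Bool), θ i = (α x, s) →
    ∃! j : Fin ℓ, abar j = i ∧ ψ j = (x, s)) ∧
  -- ā is order-preserving
  Monotone abar ∧
  -- condition (†) on fibres
  (∀ i : Fin k, ∀ j j' : Fin ℓ, abar j = i → abar j' = i → j ≤ j' →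
    if (θ i).2 then (ψ j').1 ≤ (ψ j).1 else (ψ j).1 ≤ (ψ j').1)

namespace TravPB

variable {n k m : ℕ} (θ : Traversal n k) (α : Fin (m + 1) →o Fin (n + 1))

def fib (i : Fin k) : Finset (Fin (m + 1)) := Finset.univ.filter (fun x => α x = (θ i).1)

def cnt (i : Fin k) : ℕ := (fib θ α i).card

def off (i : Fin k) : ℕ := ∑ i' ∈ Finset.univ.filter (fun i' => i' < i), cnt θ α i'

def tot : ℕ := ∑ i, cnt θ α i

lemma off_add_le {i i' : Fin k} (h : i < i') : off θ α i + cnt θ α i ≤ off θ α i' := by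
  have hsub : insert i (Finset.univ.filter (fun i'' => i'' < i)) ⊆
      Finset.univ.filter (fun i'' => i'' < i') := by
    intro x hx
    simp only [Finset.mem_insert, Finset.mem_filter, Finset.mem_univ, true_and] at hx ⊢
    rcases hx with rfl | hx
    · exact h
    · exact hx.trans h
  have hnot : i ∉ Finset.univ.filter (fun i'' => i'' < i) := by simp
  calc off θ α i + cnt θ α i
      = ∑ i'' ∈ insert i (Finset.univ.filter (fun i'' => i'' < i)), cnt θ α i'' := by
        rw [Finset.sum_insert hnot, add_comm]; rfl
    _ ≤ off θ α i' := Finset.sum_le_sum_of_subset hsub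

lemma off_add_le_tot (i : Fin k) : off θ α i + cnt θ α i ≤ tot θ α := by
  have hnot : i ∉ Finset.univ.filter (fun i'' => i'' < i) := by simp
  calc off θ α i + cnt θ α i
      = ∑ i'' ∈ insert i (Finset.univ.filter (fun i'' => i'' < i)), cnt θ α i'' := by
        rw [Finset.sum_insert hnot, add_comm]; rfl
    _ ≤ tot θ α := Finset.sum_le_sum_of_subset (Finset.subset_univ _)

def emb (p : Σ i : Fin k, Fin (cnt θ α i)) : Fin (tot θ α) :=
  ⟨off θ α p.1 + p.2.1, lt_of_lt_of_le (by have := p.2.2; omega) (off_add_le_tot θ α p.1)⟩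

lemma emb_lt {i i' : Fin k} (h : i < i') (a : Fin (cnt θ α i)) (a' : Fin (cnt θ α i')) :
    emb θ α ⟨i, a⟩ < emb θ α ⟨i', a'⟩ := by
  have h1 := off_add_le θ α h
  have h2 := a.2
  simp only [emb, Fin.mk_lt_mk]
  omega

lemma emb_inj : Function.Injective (emb θ α) := by
  rintro ⟨i, a⟩ ⟨i', a'⟩ h
  rcases lt_trichotomy i i' with hlt | heq | hgt
  · exact absurd h (ne_of_lt (emb_lt θ α hlt a a'))
  · subst heq
    simp only [emb, Fin.mk.injEq] at h
    have : a = a' := Fin.ext (by omega)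
    rw [this]
  · exact absurd h.symm (ne_of_lt (emb_lt θ α hgt a' a))

lemma emb_bij : Function.Bijective (emb θ α) := by
  rw [Fintype.bijective_iff_injective_and_card]
  refine ⟨emb_inj θ α, ?_⟩
  simp only [Fintype.card_sigma, Fintype.card_fin]; rfl

noncomputable def eqv : (Σ i : Fin k, Fin (cnt θ α i)) ≃ Fin (tot θ α) :=
  Equiv.ofBijective _ (emb_bij θ α)

def psiF (p : Σ i : Fin k, Fin (cnt θ α i)) : Fin (m + 1) × Bool :=
  ((fib θ α p.1).orderEmbOfFin rfl (if (θ p.1).2 then p.2.rev else p.2), (θ p.1).2)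

noncomputable def abarD (j : Fin (tot θ α)) : Fin k := ((eqv θ α).symm j).1

noncomputable def psiD (j : Fin (tot θ α)) : Fin (m + 1) × Bool :=
  psiF θ α ((eqv θ α).symm j)

lemma abarD_eqv (p : Σ i : Fin k, Fin (cnt θ α i)) : abarD θ α (eqv θ α p) = p.1 := by
  simp [abarD]

lemma psiD_eqv (p : Σ i : Fin k, Fin (cnt θ α i)) : psiD θ α (eqv θ α p) = psiF θ α p := by
  rw [psiD, Equiv.symm_apply_apply]

lemma eqv_val (i : Fin k) (a : Fin (cnt θ α i)) :
    (eqv θ α ⟨i, a⟩ : ℕ) = off θ α i + a.1 := rfl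

lemma fst_le {i i' : Fin k} {a : Fin (cnt θ α i)} {a' : Fin (cnt θ α i')}
    (h : eqv θ α ⟨i, a⟩ ≤ eqv θ α ⟨i', a'⟩) : i ≤ i' := by
  by_contra hc
  exact absurd h (not_le.mpr (emb_lt θ α (not_le.mp hc) a' a))

lemma snd_le {i : Fin k} {a a' : Fin (cnt θ α i)}
    (h : eqv θ α ⟨i, a⟩ ≤ eqv θ α ⟨i, a'⟩) : a ≤ a' := by
  have h1 := eqv_val θ α i a
  have h2 := eqv_val θ α i a'
  have h' : (eqv θ α ⟨i, a⟩ : ℕ) ≤ (eqv θ α ⟨i, a'⟩ : ℕ) := h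
  rw [Fin.le_def]
  omega

lemma mem_fib {i : Fin k} {x : Fin (m + 1)} : x ∈ fib θ α i ↔ α x = (θ i).1 := by
  simp [fib]

lemma psiF_inj {i : Fin k} {a a' : Fin (cnt θ α i)}
    (h : psiF θ α ⟨i, a⟩ = psiF θ α ⟨i, a'⟩) : a = a' := by
  have h1 : (fib θ α i).orderEmbOfFin rfl (if (θ i).2 then a.rev else a) =
      (fib θ α i).orderEmbOfFin rfl (if (θ i).2 then a'.rev else a') :=
    congrArg Prod.fst h
  have h2 := ((fib θ α i).orderEmbOfFin (rfl : (fib θ α i).card = cnt θ α i)).injective h1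
  cases hs : (θ i).2 <;> simp [hs] at h2
  · exact h2
  · exact Fin.rev_injective h2

theorem isPB : IsTraversalPullback θ α (tot θ α) (psiD θ α) (abarD θ α) := by
  refine ⟨?_, ?_, ?_, ?_⟩
  · -- commutes
    intro j
    obtain ⟨p, rfl⟩ := (eqv θ α).surjective j
    rw [psiD_eqv, abarD_eqv]
    have hmem : (fib θ α p.1).orderEmbOfFin rfl (if (θ p.1).2 then p.2.rev else p.2) ∈
        fib θ α p.1 := Finset.orderEmbOfFin_mem _ _ _
    rw [mem_fib] at hmem
    simp only [psiF, hmem]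
  · -- pullback
    intro i x s hx
    have hs : s = (θ i).2 := by rw [hx]
    have hmem : x ∈ fib θ α i := by rw [mem_fib, hx]
    have key : ∀ j : Fin (tot θ α), (abarD θ α j = i ∧ psiD θ α j = (x, s)) →
        ∀ j' : Fin (tot θ α), (abarD θ α j' = i ∧ psiD θ α j' = (x, s)) → j = j' := by
      rintro j ⟨hj1, hj2⟩ j' ⟨hj1', hj2'⟩
      obtain ⟨⟨i1, a1⟩, rfl⟩ := (eqv θ α).surjective j
      obtain ⟨⟨i2, a2⟩, rfl⟩ := (eqv θ α).surjective j'
      rw [abarD_eqv] at hj1 hj1'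
      rw [psiD_eqv] at hj2 hj2'
      obtain rfl : i1 = i2 := hj1.trans hj1'.symm
      congr 1
      exact Sigma.ext rfl (heq_of_eq (psiF_inj θ α (hj2.trans hj2'.symm)))
    set b : Fin (cnt θ α i) := ((fib θ α i).orderIsoOfFin rfl).symm ⟨x, hmem⟩ with hb
    have hbx : (fib θ α i).orderEmbOfFin rfl b = x := by
      rw [← Finset.coe_orderIsoOfFin_apply, OrderIso.apply_symm_apply]
    have hw : abarD θ α (eqv θ α ⟨i, if (θ i).2 then b.rev else b⟩) = i ∧
        psiD θ α (eqv θ α ⟨i, if (θ i).2 then b.rev else b⟩) = (x, s) := by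
      refine ⟨abarD_eqv θ α _, ?_⟩
      rw [psiD_eqv]
      have hval : (if (θ i).2 then (if (θ i).2 then b.rev else b).rev
          else (if (θ i).2 then b.rev else b)) = b := by
        cases hss : (θ i).2 <;> simp [Fin.rev_rev]
      simp only [psiF, hs]
      exact Prod.ext ((congrArg (fun c => (fib θ α i).orderEmbOfFin rfl c) hval).trans hbx) rfl
    exact ⟨_, hw, fun y hy => key y hy _ hw⟩
  · -- monotone
    intro j j' hle
    obtain ⟨⟨i, a⟩, rfl⟩ := (eqv θ α).surjective j
    obtain ⟨⟨i', a'⟩, rfl⟩ := (eqv θ α).surjective j'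
    rw [abarD_eqv, abarD_eqv]
    exact fst_le θ α hle
  · -- (†)
    intro i j j' hj hj' hle
    obtain ⟨⟨i1, a1⟩, rfl⟩ := (eqv θ α).surjective j
    obtain ⟨⟨i2, a2⟩, rfl⟩ := (eqv θ α).surjective j'
    rw [abarD_eqv] at hj hj'
    obtain rfl : i1 = i2 := hj.trans hj'.symm
    obtain rfl := hj
    have ha : a1 ≤ a2 := snd_le θ α hle
    rw [psiD_eqv, psiD_eqv]
    simp only [psiF]
    split_ifs with hss
    · simp only [hss, ↓reduceIte]; exact ((fib θ α _).orderEmbOfFin rfl).monotone (Fin.rev_le_rev.mpr ha)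
    · simp only [hss, ↓reduceIte]; exact ((fib θ α _).orderEmbOfFin rfl).monotone ha

end TravPB

lemma pb_unique {n k m : ℕ} {θ : Traversal n k} {α : Fin (m + 1) →o Fin (n + 1)}
    {ℓ ℓ' : ℕ} {ψ : Traversal m ℓ} {abar : Fin ℓ → Fin k}
    {ψ' : Traversal m ℓ'} {abar' : Fin ℓ' → Fin k}
    (h : IsTraversalPullback θ α ℓ ψ abar) (h' : IsTraversalPullback θ α ℓ' ψ' abar') :
    (⟨ℓ, ψ, abar⟩ : Σ ℓ : ℕ, Traversal m ℓ × (Fin ℓ → Fin k)) = ⟨ℓ', ψ', abar'⟩ := by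
  obtain ⟨hc, hp, hm, ht⟩ := h
  obtain ⟨hc', hp', hm', ht'⟩ := h'
  have key : ∀ j : Fin ℓ, ∃! j' : Fin ℓ', abar' j' = abar j ∧ ψ' j' = ψ j :=
    fun j => hp' (abar j) (ψ j).1 (ψ j).2 (hc j).symm
  have key' : ∀ j' : Fin ℓ', ∃! j : Fin ℓ, abar j = abar' j' ∧ ψ j = ψ' j' :=
    fun j' => hp (abar' j') (ψ' j').1 (ψ' j').2 (hc' j').symm
  choose f hf using key
  choose g hg using key'
  have hf1 : ∀ j, abar' (f j) = abar j := fun j => (hf j).1.1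
  have hf2 : ∀ j, ψ' (f j) = ψ j := fun j => (hf j).1.2
  have hg1 : ∀ j', abar (g j') = abar' j' := fun j' => (hg j').1.1
  have hg2 : ∀ j', ψ (g j') = ψ' j' := fun j' => (hg j').1.2
  have gf : ∀ j, g (f j) = j := by
    intro j
    have ku := hp (abar j) (ψ j).1 (ψ j).2 (hc j).symm
    exact ku.unique ⟨by rw [hg1, hf1], by rw [hg2, hf2]⟩ ⟨rfl, rfl⟩
  have fg : ∀ j', f (g j') = j' := by
    intro j'
    have ku := hp' (abar' j') (ψ' j').1 (ψ' j').2 (hc' j').symm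
    exact ku.unique ⟨by rw [hf1, hg1], by rw [hf2, hg2]⟩ ⟨rfl, rfl⟩
  have hbij : Function.Bijective f :=
    ⟨fun a b hab => by rw [← gf a, hab, gf], fun j' => ⟨g j', fg j'⟩⟩
  have hfs : StrictMono f := by
    intro j1 j2 hlt
    rcases lt_or_eq_of_le (hm hlt.le) with hab | hab
    · by_contra hc2
      have hle' : f j2 ≤ f j1 := not_lt.mp hc2
      have h3 := hm' hle'
      rw [hf1, hf1] at h3
      exact absurd hab (not_lt.mpr h3)
    · by_contra hc2
      have hle' : f j2 ≤ f j1 := not_lt.mp hc2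
      have t1 := ht (abar j1) j1 j2 rfl hab.symm hlt.le
      have t2 := ht' (abar j1) (f j2) (f j1) (by rw [hf1, hab]) (hf1 j1) hle'
      rw [hf2, hf2] at t2
      have hne : (ψ j1).1 ≠ (ψ j2).1 := by
        intro he
        have e1 := congrArg Prod.snd (hc j1)
        have e2 := congrArg Prod.snd (hc j2)
        simp only at e1 e2
        have hsnd : (ψ j1).2 = (ψ j2).2 := by rw [e1, e2, hab]
        have hpp : ψ j1 = ψ j2 := Prod.ext he hsnd
        have ku := hp (abar j1) (ψ j1).1 (ψ j1).2 (hc j1).symm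
        have := ku.unique ⟨rfl, rfl⟩ ⟨hab.symm, by rw [hpp]⟩
        exact absurd this hlt.ne
      cases hb : (θ (abar j1)).2 <;> rw [hb] at t1 t2 <;> simp only [if_true, if_false,
          Bool.false_eq_true] at t1 t2
      · exact hne (le_antisymm t1 t2)
      · exact hne (le_antisymm t2 t1)
  have hll : ℓ = ℓ' := by
    have := Fintype.card_of_bijective hbij
    simpa using this
  subst hll
  have hid : f = id := by
    have hr : Set.range f = Set.range (id : Fin ℓ → Fin ℓ) := by
      rw [Set.range_id, Set.range_eq_univ.mpr hbij.2]
    have inst : WellFoundedLT (Fin ℓ) := inferInstance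
    exact (@StrictMono.range_inj (Fin ℓ) (Fin ℓ) Fin.instLinearOrder (by infer_instance)
      inst f id hfs strictMono_id).1 hr
  have habar : abar = abar' := by
    funext j
    rw [← hf1 j, hid]; rfl
  have hpsi : ψ = ψ' := by
    funext j
    rw [← hf2 j, hid]; rfl
  rw [habar, hpsi]

/-- for every traversal `θ` and order-preserving `α` there is a unique
pullback square satisfying condition (†). -/
theorem traversal_pullback_exists_unique {n k m : ℕ} (θ : Traversal n k)
    (α : Fin (m + 1) →o Fin (n + 1)) :
    ∃! p : Σ ℓ : ℕ, Traversal m ℓ × (Fin ℓ → Fin k),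
      IsTraversalPullback θ α p.1 p.2.1 p.2.2 := by
  refine ⟨⟨TravPB.tot θ α, TravPB.psiD θ α, TravPB.abarD θ α⟩, TravPB.isPB θ α, ?_⟩
  rintro ⟨ℓ, ψ, abar⟩ hq
  exact pb_unique hq (TravPB.isPB θ α)
end

section
/- The action of simplicial operators on traversals is functorial: with θ·α defined as the unique top map ψ of the pullback square satisfying condition (†) (the fibre-monotonicity condition), one has θ·id_{[n]} = θ and θ·(α∘β) = (θ·α)·β for all order-preserving α : [m] → [n] and β : [l] → [m]. Consequently, the assignment [n] ↦ {n-dimensional traversals} is a simplicial set M1. -/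
/-- the action of simplicial operators on traversals is functorial:
`θ · id = θ` and `θ · (α ∘ β) = (θ · α) · β` (so traversals form a simplicial set `M1`).
Since `θ · α` is characterised uniquely by `IsTraversalPullback`, functoriality is
expressed by saying that the identity data realise `θ · id`, and that the composite of
the pullback data for `α` and `β` realises `θ · (α ∘ β)`. -/
theorem traversal_action_functorial :
    (∀ (n k : ℕ) (θ : Traversal n k),
      IsTraversalPullback θ (OrderHom.id : Fin (n + 1) →o Fin (n + 1)) k θ id) ∧
    (∀ (n m l k : ℕ) (θ : Traversal n k)
      (α : Fin (m + 1) →o Fin (n + 1)) (β : Fin (l + 1) →o Fin (m + 1))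
      (ℓ₁ : ℕ) (ψ₁ : Traversal m ℓ₁) (abar₁ : Fin ℓ₁ → Fin k)
      (ℓ₂ : ℕ) (ψ₂ : Traversal l ℓ₂) (abar₂ : Fin ℓ₂ → Fin ℓ₁),
      IsTraversalPullback θ α ℓ₁ ψ₁ abar₁ →
      IsTraversalPullback ψ₁ β ℓ₂ ψ₂ abar₂ →
      IsTraversalPullback θ (α.comp β) ℓ₂ ψ₂ (abar₁ ∘ abar₂)) := by
  constructor
  · intro n k θ
    refine ⟨fun j => by simp, ?_, monotone_id, ?_⟩
    · intro i x s h
      exact ⟨i, ⟨rfl, by simpa using h⟩, fun j hj => hj.1⟩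
    · intro i j j' hj hj' hle
      simp only [id_eq] at hj hj'
      subst hj; subst hj'
      split <;> exact le_refl _
  · rintro n m l k θ α β ℓ₁ ψ₁ abar₁ ℓ₂ ψ₂ abar₂ ⟨h1a, h1b, h1c, h1d⟩ ⟨h2a, h2b, h2c, h2d⟩
    refine ⟨?_, ?_, h1c.comp h2c, ?_⟩
    · intro j
      have e2 := h2a j
      have e1 := h1a (abar₂ j)
      have hfst : (ψ₁ (abar₂ j)).1 = β (ψ₂ j).1 := by rw [← e2]
      have hsnd : (ψ₁ (abar₂ j)).2 = (ψ₂ j).2 := by rw [← e2]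
      simpa [OrderHom.comp, ← hfst, ← hsnd] using e1
    · intro i x s h
      obtain ⟨j₁, ⟨hj₁a, hj₁b⟩, hj₁u⟩ := h1b i (β x) s (by simpa using h)
      obtain ⟨j₂, ⟨hj₂a, hj₂b⟩, hj₂u⟩ := h2b j₁ x s hj₁b
      refine ⟨j₂, ⟨by simp [hj₂a, hj₁a], hj₂b⟩, ?_⟩
      rintro j ⟨hja, hjb⟩
      have e2 := h2a j
      rw [hjb] at e2
      have : abar₂ j = j₁ := hj₁u (abar₂ j) ⟨hja, e2.symm⟩
      exact hj₂u j ⟨this, hjb⟩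
    · intro i j j' hj hj' hle
      simp only [Function.comp_apply] at hj hj'
      have hmono : abar₂ j ≤ abar₂ j' := h2c hle
      have e2 := h2a j
      have e2' := h2a j'
      have s2 : (ψ₁ (abar₂ j)).2 = (θ i).2 := by
        have := h1a (abar₂ j); rw [hj] at this; rw [← this]
      have s2' : (ψ₁ (abar₂ j')).2 = (θ i).2 := by
        have := h1a (abar₂ j'); rw [hj'] at this; rw [← this]
      rcases eq_or_lt_of_le hmono with heq | hlt
      · have := h2d (abar₂ j) j j' rfl heq.symm hle
        rw [s2] at this
        exact this
      · -- fibre elements over distinct i₁ < i₁'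
        have hfib := h1d i (abar₂ j) (abar₂ j') hj hj' hmono
        have hne : (ψ₁ (abar₂ j)).1 ≠ (ψ₁ (abar₂ j')).1 := by
          intro heq1
          have hpair : ψ₁ (abar₂ j) = ψ₁ (abar₂ j') :=
            Prod.ext heq1 (s2.trans s2'.symm)
          have hθ : θ i = (α (ψ₁ (abar₂ j)).1, (ψ₁ (abar₂ j)).2) := by
            have := h1a (abar₂ j); rw [hj] at this; exact this.symm
          obtain ⟨j₀, _, hu⟩ := h1b i (ψ₁ (abar₂ j)).1 (ψ₁ (abar₂ j)).2 hθ
          have := (hu (abar₂ j) ⟨hj, rfl⟩).trans (hu (abar₂ j') ⟨hj', hpair.symm⟩).symm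
          exact absurd this hlt.ne
        have bfst : β (ψ₂ j).1 = (ψ₁ (abar₂ j)).1 := by rw [← e2]
        have bfst' : β (ψ₂ j').1 = (ψ₁ (abar₂ j')).1 := by rw [← e2']
        cases hs : (θ i).2 with
        | true =>
          rw [hs] at hfib; rw [if_pos rfl] at hfib
          have hstrict : (ψ₁ (abar₂ j')).1 < (ψ₁ (abar₂ j)).1 :=
            lt_of_le_of_ne hfib (fun h => hne h.symm)
          rw [if_pos rfl]
          by_contra hcon
          push_neg at hcon
          have : β (ψ₂ j).1 ≤ β (ψ₂ j').1 := β.monotone hcon.le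
          rw [bfst, bfst'] at this
          exact absurd this (not_le.mpr hstrict)
        | false =>
          rw [hs] at hfib; rw [if_neg (by simp)] at hfib
          have hstrict : (ψ₁ (abar₂ j)).1 < (ψ₁ (abar₂ j')).1 :=
            lt_of_le_of_ne hfib hne
          rw [if_neg (by simp)]
          by_contra hcon
          push_neg at hcon
          have : β (ψ₂ j').1 ≤ β (ψ₂ j).1 := β.monotone hcon.le
          rw [bfst, bfst'] at this
          exact absurd this (not_le.mpr hstrict)
end

section
/- In a path object category E, for any morphism f : X → Y, the map λ_f : X → Pf (induced into the pullback Pf of t_Y : MY → Y along f by the pair (r_Y∘f, id_X)) admits a strong deformation retraction: there exist a retraction e_f : Pf → X with e_f∘λ_f = id_X, and a homotopy θ_f : id_{Pf} ⇒ λ_f∘e_f (a map Pf → MPf with s∘θ_f = id and t∘θ_f = λ_f∘e_f) which is trivial on X, i.e. θ_f∘λ_f = r_{Pf}∘λ_f. -/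
open CategoryTheory CategoryTheory.Limits

universe v u

/-- A path object category: a finitely complete category `E` with a pullback-preserving
endofunctor `M`, an internal category structure `MX ⇉ X` on every object (source `s`,
target `t`, identities `r`, composition `comp`, expressed on generalised elements via
`pullback.lift`), an involution `τ`, a strength (given by its components
`a1 : M1 × X ⟶ MX`, which determine it), and a contraction `η : M ⇒ MM` satisfying the
path-contraction equations. -/
structure PathObjCat (E : Type u) [Category.{v} E] [HasFiniteLimits E] where
  M : E ⥤ E
  preservesPullbacks : ∀ {P X Y Z : E} (fst : P ⟶ X) (snd : P ⟶ Y) (f : X ⟶ Z) (g : Y ⟶ Z),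
    IsPullback fst snd f g → IsPullback (M.map fst) (M.map snd) (M.map f) (M.map g)
  s : M ⟶ 𝟭 E
  t : M ⟶ 𝟭 E
  r : 𝟭 E ⟶ M
  r_s : ∀ X : E, r.app X ≫ s.app X = 𝟙 X
  r_t : ∀ X : E, r.app X ≫ t.app X = 𝟙 X
  /-- composition of a composable pair of generalised paths `u, v` (with `s∘u = t∘v`). -/
  comp : ∀ {W X : E} (u v : W ⟶ M.obj X), u ≫ s.app X = v ≫ t.app X → (W ⟶ M.obj X)
  comp_natural : ∀ {W' W X : E} (g : W' ⟶ W) (u v : W ⟶ M.obj X) (h h'),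
    comp (g ≫ u) (g ≫ v) h' = g ≫ comp u v h
  comp_s : ∀ {W X : E} (u v : W ⟶ M.obj X) (h), comp u v h ≫ s.app X = v ≫ s.app X
  comp_t : ∀ {W X : E} (u v : W ⟶ M.obj X) (h), comp u v h ≫ t.app X = u ≫ t.app X
  comp_map : ∀ {W X Y : E} (f : X ⟶ Y) (u v : W ⟶ M.obj X) (h h'),
    comp u v h ≫ M.map f = comp (u ≫ M.map f) (v ≫ M.map f) h'
  left_unit : ∀ {W X : E} (u : W ⟶ M.obj X) (h), comp (u ≫ t.app X ≫ r.app X) u h = u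
  right_unit : ∀ {W X : E} (u : W ⟶ M.obj X) (h), comp u (u ≫ s.app X ≫ r.app X) h = u
  assoc : ∀ {W X : E} (u v w : W ⟶ M.obj X) (huv : u ≫ s.app X = v ≫ t.app X)
    (hvw : v ≫ s.app X = w ≫ t.app X) (h₁ h₂),
    comp (comp u v huv) w h₁ = comp u (comp v w hvw) h₂
  tau : M ⟶ M
  tau_tau : ∀ X : E, tau.app X ≫ tau.app X = 𝟙 (M.obj X)
  tau_s : ∀ X : E, tau.app X ≫ s.app X = t.app X
  tau_t : ∀ X : E, tau.app X ≫ t.app X = s.app X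
  r_tau : ∀ X : E, r.app X ≫ tau.app X = r.app X
  tau_comp : ∀ {W X : E} (u v : W ⟶ M.obj X) (h h'),
    comp u v h ≫ tau.app X = comp (v ≫ tau.app X) (u ≫ tau.app X) h'
  /-- the component `α_{1,X} : M1 × X ⟶ MX` of the strength. -/
  a1 : ∀ X : E, (M.obj (⊤_ E)) ⨯ X ⟶ M.obj X
  a1_natural : ∀ {X Y : E} (f : X ⟶ Y),
    prod.map (𝟙 (M.obj (⊤_ E))) f ≫ a1 Y = a1 X ≫ M.map f
  a1_s : ∀ X : E, a1 X ≫ s.app X = prod.snd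
  a1_t : ∀ X : E, a1 X ≫ t.app X = prod.snd
  /-- `r` is strong: `r_X = α_{1,X} ∘ (r_1 ∘ !, id)`. -/
  r_strong : ∀ X : E,
    prod.lift (terminal.from X ≫ r.app (⊤_ E)) (𝟙 X) ≫ a1 X = r.app X
  /-- `m` is strong: constant paths compose to constant paths. -/
  comp_strong : ∀ {W X : E} (u v : W ⟶ M.obj (⊤_ E)) (x : W ⟶ X) (h h'),
    comp (prod.lift u x ≫ a1 X) (prod.lift v x ≫ a1 X) h =
      prod.lift (comp u v h') x ≫ a1 X
  eta : ∀ X : E, M.obj X ⟶ M.obj (M.obj X)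
  eta_natural : ∀ {X Y : E} (f : X ⟶ Y),
    eta X ≫ M.map (M.map f) = M.map f ≫ eta Y
  eta_s : ∀ X : E, eta X ≫ s.app (M.obj X) = 𝟙 (M.obj X)
  eta_t : ∀ X : E, eta X ≫ t.app (M.obj X) = t.app X ≫ r.app X
  eta_Ms : ∀ X : E, eta X ≫ M.map (s.app X) = 𝟙 (M.obj X)
  eta_Mt : ∀ X : E, eta X ≫ M.map (t.app X) =
    prod.lift (M.map (terminal.from X)) (t.app X) ≫ a1 X
  eta_r : ∀ X : E, r.app X ≫ eta X = r.app X ≫ r.app (M.obj X)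

/-- in a path object category, for any `f : X ⟶ Y`, the map
`λ_f : X ⟶ Pf` into the pullback `Pf` of `t_Y : MY ⟶ Y` along `f` admits a strong
deformation retraction: the projection `e_f : Pf ⟶ X` is a retraction of `λ_f`, and there
is a homotopy `θ_f : id_{Pf} ⇒ λ_f ∘ e_f` which is trivial on `X`. -/
theorem lambda_strong_deformation_retract {E : Type u} [Category.{v} E] [HasFiniteLimits E]
    (P : PathObjCat E) {X Y Pf : E} (f : X ⟶ Y)
    (d : Pf ⟶ P.M.obj Y) (e : Pf ⟶ X)
    (pb : IsPullback d e (P.t.app Y) f)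
    (lam : X ⟶ Pf) (hlam_d : lam ≫ d = f ≫ P.r.app Y) (hlam_e : lam ≫ e = 𝟙 X) :
    -- e_f is a retraction of λ_f
    lam ≫ e = 𝟙 X ∧
    -- and there is a homotopy id_{Pf} ⇒ λ_f ∘ e_f, trivial on X
    ∃ θ : Pf ⟶ P.M.obj Pf,
      θ ≫ P.s.app Pf = 𝟙 Pf ∧
      θ ≫ P.t.app Pf = e ≫ lam ∧
      lam ≫ θ = lam ≫ P.r.app Pf := by
  refine ⟨hlam_e, ?_⟩
  have mpb : IsPullback (P.M.map d) (P.M.map e) (P.M.map (P.t.app Y)) (P.M.map f) :=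
    P.preservesPullbacks d e (P.t.app Y) f pb
  have hde : d ≫ P.t.app Y = e ≫ f := pb.w
  set u : Pf ⟶ P.M.obj (P.M.obj Y) := d ≫ P.eta Y with hu
  set v : Pf ⟶ P.M.obj X :=
    prod.lift (d ≫ P.M.map (terminal.from Y)) e ≫ P.a1 X with hv
  have hw : u ≫ P.M.map (P.t.app Y) = v ≫ P.M.map f := by
    have h1 : u ≫ P.M.map (P.t.app Y) =
        prod.lift (d ≫ P.M.map (terminal.from Y)) (d ≫ P.t.app Y) ≫ P.a1 Y := by
      rw [hu, Category.assoc, P.eta_Mt, ← Category.assoc, prod.comp_lift]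
    have h2 : v ≫ P.M.map f =
        prod.lift (d ≫ P.M.map (terminal.from Y)) (e ≫ f) ≫ P.a1 Y := by
      rw [hv, Category.assoc, ← P.a1_natural f, ← Category.assoc, prod.lift_map,
        Category.comp_id]
    rw [h1, h2, hde]
    rfl
  refine ⟨mpb.lift u v hw, ?_, ?_, ?_⟩
  · apply pb.hom_ext
    · have hsd : P.s.app Pf ≫ d = P.M.map d ≫ P.s.app (P.M.obj Y) := by
        simpa using (P.s.naturality d).symm
      rw [Category.assoc, hsd, ← Category.assoc, mpb.lift_fst, hu, Category.assoc,
        P.eta_s, Category.comp_id, Category.id_comp]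
    · have hse : P.s.app Pf ≫ e = P.M.map e ≫ P.s.app X := by
        simpa using (P.s.naturality e).symm
      rw [Category.assoc, hse, ← Category.assoc, mpb.lift_snd, hv, Category.assoc,
        P.a1_s, prod.lift_snd, Category.id_comp]
  · apply pb.hom_ext
    · have htd : P.t.app Pf ≫ d = P.M.map d ≫ P.t.app (P.M.obj Y) := by
        simpa using (P.t.naturality d).symm
      rw [Category.assoc, htd, ← Category.assoc, mpb.lift_fst, hu, Category.assoc,
        P.eta_t, Category.assoc, hlam_d, ← Category.assoc, hde, Category.assoc]
    · have hte : P.t.app Pf ≫ e = P.M.map e ≫ P.t.app X := by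
        simpa using (P.t.naturality e).symm
      rw [Category.assoc, hte, ← Category.assoc, mpb.lift_snd, hv, Category.assoc,
        P.a1_t, prod.lift_snd, Category.assoc, hlam_e, Category.comp_id]
  · apply mpb.hom_ext
    · have hrd : P.r.app Pf ≫ P.M.map d = d ≫ P.r.app (P.M.obj Y) := by
        simpa using (P.r.naturality d).symm
      rw [Category.assoc, Category.assoc, mpb.lift_fst, hrd, hu, ← Category.assoc,
        ← Category.assoc, hlam_d, Category.assoc, Category.assoc, P.eta_r]
    · have hre : P.r.app Pf ≫ P.M.map e = e ≫ P.r.app X := by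
        simpa using (P.r.naturality e).symm
      have hrY : P.r.app Y ≫ P.M.map (terminal.from Y) =
          terminal.from Y ≫ P.r.app (⊤_ E) := by
        simpa using (P.r.naturality (terminal.from Y)).symm
      rw [Category.assoc, Category.assoc, mpb.lift_snd, hre,
        ← Category.assoc lam e, hlam_e, Category.id_comp, hv, ← Category.assoc,
        prod.comp_lift, hlam_e,
        ← Category.assoc lam d, hlam_d, Category.assoc, hrY, ← Category.assoc,
        ← P.r_strong X]
      congr 1
      apply Limits.prod.hom_ext
      · simp
      · simp
end

section
/- In a path object category E, for a morphism x : X → Γ, let M_Γ(x) be the pullback of Mx : MX → MΓ along α_{1,Γ} : M1 × Γ → MΓ, with inclusion j_x : M_Γ(x) → MX, and set s_x = s_X∘j_x and t_x = t_X∘j_x. Then the subgraph M_Γ(x) ⇉ X of MX ⇉ X is closed under identities and composition: r_X : X → MX factors through j_x, and m_X restricted to composable pairs in M_Γ(x) factors through j_x; hence M_Γ(x) ⇉ X is an internal category. -/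
open CategoryTheory CategoryTheory.Limits

universe v u

/-- for `x : X ⟶ Γ` in a path object category, the subobject
`M_Γ(x) ↪ MX` of paths constant over `Γ` (the pullback of `Mx` along `α_{1,Γ}`) is closed
under identities and composition: `r_X` factors through `j_x`, and the composite (in `MX`)
of two generalised elements of `M_Γ(x)` again factors through `j_x`; hence
`M_Γ(x) ⇉ X` is an internal (sub)category of `MX ⇉ X`. -/
theorem constant_paths_subcategory {E : Type u} [Category.{v} E] [HasFiniteLimits E]
    (P : PathObjCat E) {X Γ MG : E} (x : X ⟶ Γ)
    (j : MG ⟶ P.M.obj X) (u : MG ⟶ (P.M.obj (⊤_ E)) ⨯ Γ)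
    (pb : IsPullback j u (P.M.map x) (P.a1 Γ)) :
    -- identities are constant paths
    (∃! rx : X ⟶ MG, rx ≫ j = P.r.app X ∧
      rx ≫ u = prod.lift (terminal.from X ≫ P.r.app (⊤_ E)) x) ∧
    -- constant paths are closed under composition
    (∀ (W : E) (p q : W ⟶ MG)
      (h : (p ≫ j) ≫ P.s.app X = (q ≫ j) ≫ P.t.app X),
      ∃ c : W ⟶ MG, c ≫ j = P.comp (p ≫ j) (q ≫ j) h) := by
  constructor
  · -- identities
    have hcomm : P.r.app X ≫ P.M.map x =
        prod.lift (terminal.from X ≫ P.r.app (⊤_ E)) x ≫ P.a1 Γ := by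
      have hnat : P.r.app X ≫ P.M.map x = x ≫ P.r.app Γ := (P.r.naturality x).symm
      rw [hnat, ← P.r_strong Γ, ← Category.assoc]
      congr 1
      apply Limits.prod.hom_ext
      · simp only [Category.assoc, prod.lift_fst]
        rw [← Category.assoc, terminal.comp_from]
      · simp
    refine ⟨pb.lift _ _ hcomm, ⟨pb.lift_fst _ _ hcomm, pb.lift_snd _ _ hcomm⟩, ?_⟩
    intro y hy
    apply pb.hom_ext
    · rw [pb.lift_fst, hy.1]
    · rw [pb.lift_snd, hy.2]
  · intro W p q h
    set a : W ⟶ P.M.obj (⊤_ E) := p ≫ u ≫ prod.fst with ha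
    set b : W ⟶ P.M.obj (⊤_ E) := q ≫ u ≫ prod.fst with hb
    set γ : W ⟶ Γ := p ≫ u ≫ prod.snd with hγ
    have hpu : p ≫ u = prod.lift a γ := by
      apply Limits.prod.hom_ext
      · rw [prod.lift_fst, Category.assoc]
      · rw [prod.lift_snd, Category.assoc]
    have hps : p ≫ u ≫ prod.snd = p ≫ j ≫ P.s.app X ≫ x := by
      calc p ≫ u ≫ prod.snd = p ≫ u ≫ P.a1 Γ ≫ P.s.app Γ := by rw [P.a1_s Γ]
        _ = p ≫ j ≫ P.M.map x ≫ P.s.app Γ := by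
              rw [← Category.assoc u, ← pb.w]; simp
        _ = p ≫ j ≫ P.s.app X ≫ x := by
              rw [show P.M.map x ≫ P.s.app Γ = P.s.app X ≫ x from P.s.naturality x]
    have hqt : q ≫ u ≫ prod.snd = q ≫ j ≫ P.t.app X ≫ x := by
      calc q ≫ u ≫ prod.snd = q ≫ u ≫ P.a1 Γ ≫ P.t.app Γ := by rw [P.a1_t Γ]
        _ = q ≫ j ≫ P.M.map x ≫ P.t.app Γ := by
              rw [← Category.assoc u, ← pb.w]; simp
        _ = q ≫ j ≫ P.t.app X ≫ x := by
              rw [show P.M.map x ≫ P.t.app Γ = P.t.app X ≫ x from P.t.naturality x]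
    have hqu : q ≫ u = prod.lift b γ := by
      apply Limits.prod.hom_ext
      · rw [prod.lift_fst, Category.assoc]
      · rw [prod.lift_snd, hγ]
        simp only [Category.assoc]
        rw [hqt, hps, reassoc_of% h]
    have h' : a ≫ P.s.app (⊤_ E) = b ≫ P.t.app (⊤_ E) := by
      have : IsTerminal ((𝟭 E).obj (⊤_ E)) := terminalIsTerminal
      exact this.hom_ext _ _
    have hstrong : ∀ hh, P.comp (prod.lift a γ ≫ P.a1 Γ) (prod.lift b γ ≫ P.a1 Γ) hh =
        prod.lift (P.comp a b h') γ ≫ P.a1 Γ := fun hh => P.comp_strong a b γ hh h'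
    have hcomm : P.comp (p ≫ j) (q ≫ j) h ≫ P.M.map x =
        prod.lift (P.comp a b h') γ ≫ P.a1 Γ := by
      have hh : ((p ≫ j) ≫ P.M.map x) ≫ P.s.app Γ = ((q ≫ j) ≫ P.M.map x) ≫ P.t.app Γ := by
        have hs : P.M.map x ≫ P.s.app Γ = P.s.app X ≫ x := P.s.naturality x
        have ht : P.M.map x ≫ P.t.app Γ = P.t.app X ≫ x := P.t.naturality x
        simp only [Category.assoc, hs, ht]
        rw [← Category.assoc, ← Category.assoc, ← Category.assoc, ← Category.assoc, h]
      rw [P.comp_map x (p ≫ j) (q ≫ j) h hh]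
      have e1 : (p ≫ j) ≫ P.M.map x = prod.lift a γ ≫ P.a1 Γ := by
        rw [Category.assoc, pb.w, ← Category.assoc, ← hpu, Category.assoc]
      have e2 : (q ≫ j) ≫ P.M.map x = prod.lift b γ ≫ P.a1 Γ := by
        rw [Category.assoc, pb.w, ← Category.assoc, ← hqu, Category.assoc]
      have hh' : (prod.lift a γ ≫ P.a1 Γ) ≫ P.s.app Γ =
          (prod.lift b γ ≫ P.a1 Γ) ≫ P.t.app Γ := by
        rw [← e1, ← e2]; simpa using hh
      calc P.comp ((p ≫ j) ≫ P.M.map x) ((q ≫ j) ≫ P.M.map x) hh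
          = P.comp (prod.lift a γ ≫ P.a1 Γ) (prod.lift b γ ≫ P.a1 Γ) hh' := by
            congr 1 <;> simp [e1, e2]
        _ = prod.lift (P.comp a b h') γ ≫ P.a1 Γ := hstrong hh'
    exact ⟨pb.lift _ _ hcomm, pb.lift_fst _ _ hcomm⟩
end

section
/- In a path object category E, suppose i : X → A admits a strong deformation retraction (k : A → X with k∘i = id_X, and a homotopy θ : id_A ⇒ i∘k with θ∘i = r_A∘i), and f : B → A is a map equipped with a path-lifting operation as in Proposition 'pathlift' (to every x : V → X... in particular to every homotopy φ : y ⇒ f∘b it assigns φ*(b) with f∘φ*(b) = y and a lift φ̄ : φ*(b) ⇒ b over φ, naturally and preserving identity homotopies). Then the pullback ī : f*X → B of i along f admits a strong deformation retraction. -/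
open CategoryTheory CategoryTheory.Limits

universe v u

/-- the Frobenius property: if `i : X ⟶ A` admits a strong deformation
retraction and `f : B ⟶ A` carries a path-lifting structure (as in Proposition
`pathlift`), then the pullback `ī : f*X ⟶ B` of `i` along `f` admits a strong deformation
retraction. -/
theorem frobenius_pullback_sdr {E : Type u} [Category.{v} E] [HasFiniteLimits E]
    (P : PathObjCat E) {X A B fX : E} (i : X ⟶ A) (f : B ⟶ A)
    -- strong deformation retraction of i
    (k : A ⟶ X) (hk : i ≫ k = 𝟙 X)
    (θ : A ⟶ P.M.obj A)
    (hθs : θ ≫ P.s.app A = 𝟙 A) (hθt : θ ≫ P.t.app A = k ≫ i)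
    (hθi : i ≫ θ = i ≫ P.r.app A)
    -- path-lifting structure on f: to x : V ⟶ B and a homotopy φ : y ⇒ f∘x it assigns a
    -- lift φ̄ : φ*(x) ⇒ x in B over φ
    (L : ∀ {V : E} (x : V ⟶ B) (φ : V ⟶ P.M.obj A), φ ≫ P.t.app A = x ≫ f →
      (V ⟶ P.M.obj B))
    (hL_over : ∀ {V : E} (x : V ⟶ B) (φ : V ⟶ P.M.obj A) (h),
      L x φ h ≫ P.M.map f = φ)
    (hL_t : ∀ {V : E} (x : V ⟶ B) (φ : V ⟶ P.M.obj A) (h),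
      L x φ h ≫ P.t.app B = x)
    (hL_id : ∀ {V : E} (x : V ⟶ B) (h),
      L x (x ≫ f ≫ P.r.app A) h = x ≫ P.r.app B)
    (hL_nat : ∀ {W V : E} (g : W ⟶ V) (x : V ⟶ B) (φ : V ⟶ P.M.obj A) (h h'),
      L (g ≫ x) (g ≫ φ) h' = g ≫ L x φ h)
    -- the pullback of i along f
    (fbar : fX ⟶ X) (ibar : fX ⟶ B) (pb : IsPullback fbar ibar i f) :
    -- conclusion: ī admits a strong deformation retraction
    ∃ (kbar : B ⟶ fX) (θbar : B ⟶ P.M.obj B),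
      ibar ≫ kbar = 𝟙 fX ∧
      θbar ≫ P.s.app B = 𝟙 B ∧
      θbar ≫ P.t.app B = kbar ≫ ibar ∧
      ibar ≫ θbar = ibar ≫ P.r.app B := by
  -- reversed homotopy φ = f ≫ θ ≫ τ : f∘k∘i∘... ⇒ f
  have hφ : (f ≫ θ ≫ P.tau.app A) ≫ P.t.app A = 𝟙 B ≫ f := by
    have := P.tau_t A
    simp only [Category.assoc, this]
    rw [hθs, Category.comp_id, Category.id_comp]
  set ψ : B ⟶ P.M.obj B := L (𝟙 B) (f ≫ θ ≫ P.tau.app A) hφ with hψ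
  have hψMf : ψ ≫ P.M.map f = f ≫ θ ≫ P.tau.app A := hL_over _ _ _
  have hψt : ψ ≫ P.t.app B = 𝟙 B := hL_t _ _ _
  set θbar : B ⟶ P.M.obj B := ψ ≫ P.tau.app B with hθbar
  set p : B ⟶ B := ψ ≫ P.s.app B with hp
  have hθbars : θbar ≫ P.s.app B = 𝟙 B := by
    rw [hθbar, Category.assoc, P.tau_s, hψt]
  have hθbart : θbar ≫ P.t.app B = p := by
    rw [hθbar, Category.assoc, P.tau_t, hp]
  -- p ≫ f = f ≫ k ≫ i
  have hpf : p ≫ f = f ≫ k ≫ i := by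
    have hnat : P.s.app B ≫ f = P.M.map f ≫ P.s.app A := (P.s.naturality f).symm
    rw [hp, Category.assoc, hnat, ← Category.assoc, hψMf]
    have := P.tau_s A
    simp only [Category.assoc, this]
    rw [hθt]
  -- ibar ≫ ψ = ibar ≫ r_B
  have hibarψ : ibar ≫ ψ = ibar ≫ P.r.app B := by
    have h1 : ibar ≫ (f ≫ θ ≫ P.tau.app A) = ibar ≫ f ≫ P.r.app A := by
      rw [← pb.w_assoc] at *
      rw [reassoc_of% hθi]
      simp [P.r_tau A]
      rw [← Category.assoc, ← Category.assoc, pb.w]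
    have h2 : ibar ≫ ψ = L (ibar ≫ 𝟙 B) (ibar ≫ (f ≫ θ ≫ P.tau.app A))
        (by rw [Category.assoc, hφ]; simp) := (hL_nat ibar (𝟙 B) _ hφ _).symm
    rw [h2]
    have h3 : ibar ≫ (f ≫ θ ≫ P.tau.app A) = (ibar ≫ 𝟙 B) ≫ f ≫ P.r.app A := by
      simpa using h1
    have h4 := hL_id (ibar ≫ 𝟙 B) (by simp [P.r_t])
    calc L (ibar ≫ 𝟙 B) (ibar ≫ (f ≫ θ ≫ P.tau.app A)) _
        = L (ibar ≫ 𝟙 B) ((ibar ≫ 𝟙 B) ≫ f ≫ P.r.app A) (by simp [P.r_t]) := by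
          congr 1
      _ = (ibar ≫ 𝟙 B) ≫ P.r.app B := h4
      _ = ibar ≫ P.r.app B := by simp
  refine ⟨pb.lift (f ≫ k) p (by simp [hpf]), θbar, ?_, hθbars, ?_, ?_⟩
  · -- ibar ≫ kbar = 𝟙
    apply pb.hom_ext
    · rw [Category.assoc, pb.lift_fst, Category.id_comp, ← pb.w_assoc,
        hk, Category.comp_id]
    · rw [Category.assoc, pb.lift_snd, Category.id_comp, hp, ← Category.assoc,
        hibarψ, Category.assoc, P.r_s, Category.comp_id]
  · rw [hθbart, pb.lift_snd]
  · rw [hθbar, ← Category.assoc, hibarψ, Category.assoc, P.r_tau]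
end

section
/- Let θ : {1,…,k} → [n] × {+,−} be a traversal with θ(i) = (a, −), let α : [m] → [n] be order-preserving with a in the image of α, and let p, q be the smallest and largest elements of α⁻¹(a). Then the unique families of order-preserving maps h_j : [m] → [n+1] (p ≤ j ≤ q+1) and g_j : [m+1] → [n+1] (p ≤ j ≤ q) satisfying h_p = δ_a∘α, h_{q+1} = δ_{a+1}∘α, g_j∘δ_j = h_j, and g_j∘δ_{j+1} = h_{j+1} are given by h_j(x) = α(x) for x < j and α(x)+1 for x ≥ j, and g_j(x) = α(x) for x ≤ j and α(x−1)+1 for x > j. -/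
/-- let `α : [m] → [n]` be order-preserving, `a ∈ [n]` in the image of `α`,
and let `p`, `q` be the smallest and largest elements of `α⁻¹(a)`.  Then any families of
order-preserving maps `h_j : [m] → [n+1]` (for `p ≤ j ≤ q+1`) and `g_j : [m+1] → [n+1]`
(for `p ≤ j ≤ q`) with `h_p = δ_a ∘ α`, `h_{q+1} = δ_{a+1} ∘ α`, `g_j ∘ δ_j = h_j` and
`g_j ∘ δ_{j+1} = h_{j+1}` are uniquely determined, and are given by the formulas
`h_j(x) = α(x)` for `x < j`, `α(x)+1` for `x ≥ j`; and `g_j(x) = α(x)` for `x ≤ j`,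
`α(x−1)+1` for `x > j`.  (Here `δ_i` is the monotone injection omitting `i`, implemented
by `Fin.succAbove`.) -/
theorem unique_fillers {m n : ℕ} (α : Fin (m + 1) →o Fin (n + 1))
    (a : Fin (n + 1)) (p q : Fin (m + 1))
    (hpa : α p = a) (hqa : α q = a)
    (hmin : ∀ x, α x = a → p ≤ x) (hmax : ∀ x, α x = a → x ≤ q)
    (h : Fin (m + 2) → Fin (m + 1) → Fin (n + 2))
    (g : Fin (m + 1) → Fin (m + 2) → Fin (n + 2))
    (hmono : ∀ j : Fin (m + 2), p.castSucc ≤ j → j ≤ q.succ → Monotone (h j))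
    (gmono : ∀ j : Fin (m + 1), p ≤ j → j ≤ q → Monotone (g j))
    -- boundary conditions: h_p = δ_a ∘ α and h_{q+1} = δ_{a+1} ∘ α
    (hp : ∀ x, h p.castSucc x = (a.castSucc).succAbove (α x))
    (hq : ∀ x, h q.succ x = (a.succ).succAbove (α x))
    -- the defining system: g_j ∘ δ_j = h_j and g_j ∘ δ_{j+1} = h_{j+1}
    (hg₁ : ∀ j : Fin (m + 1), p ≤ j → j ≤ q →
      ∀ x : Fin (m + 1), g j (j.castSucc.succAbove x) = h j.castSucc x)
    (hg₂ : ∀ j : Fin (m + 1), p ≤ j → j ≤ q →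
      ∀ x : Fin (m + 1), g j (j.succ.succAbove x) = h j.succ x) :
    -- conclusion: the explicit formulas
    (∀ j : Fin (m + 2), p.castSucc ≤ j → j ≤ q.succ → ∀ x : Fin (m + 1),
      h j x = if x.castSucc < j then (α x).castSucc else (α x).succ) ∧
    (∀ j : Fin (m + 1), p ≤ j → j ≤ q → ∀ x : Fin (m + 2),
      g j x = if hx : (x : ℕ) ≤ (j : ℕ)
        then (α ⟨(x : ℕ), by have := j.isLt; omega⟩).castSucc
        else (α ⟨(x : ℕ) - 1, by have := x.isLt; omega⟩).succ) := by
  have key₁ : ∀ x : Fin (m+1), (p:ℕ) ≤ (x:ℕ) → a ≤ α x := by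
    intro x hx
    rw [← hpa]
    exact α.monotone (Fin.le_def.mpr hx)
  have key₂ : ∀ x : Fin (m+1), (x:ℕ) ≤ (q:ℕ) → α x ≤ a := by
    intro x hx
    rw [← hqa]
    exact α.monotone (Fin.le_def.mpr hx)
  -- forward: for x ≥ j, h j x = (α x).succ
  have forward : ∀ jn, (p:ℕ) ≤ jn → jn ≤ (q:ℕ)+1 →
      ∀ j : Fin (m+2), (j:ℕ) = jn → ∀ x : Fin (m+1), jn ≤ (x:ℕ) →
        h j x = (α x).succ := by
    intro jn hjn
    induction jn, hjn using Nat.le_induction with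
    | base =>
      intro _ j hj x hx
      have hjp : j = p.castSucc := Fin.ext (by simpa using hj)
      rw [hjp, hp x]
      exact Fin.succAbove_of_le_castSucc _ _
        (Fin.castSucc_le_castSucc_iff.mpr (key₁ x hx))
    | succ i hi ih =>
      intro hle j hj x hx
      have hiq : i ≤ (q:ℕ) := by omega
      set j' : Fin (m+1) := ⟨i, by have := q.isLt; omega⟩ with hj'
      have hpj' : p ≤ j' := Fin.le_def.mpr hi
      have hj'q : j' ≤ q := Fin.le_def.mpr hiq
      have hjj : j = j'.succ := Fin.ext (by simp [hj, hj'])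
      have e₂ : j'.succ.succAbove x = x.succ :=
        Fin.succAbove_of_le_castSucc _ _ (Fin.le_def.mpr (by simp [hj']; omega))
      have e₁ : j'.castSucc.succAbove x = x.succ :=
        Fin.succAbove_of_le_castSucc _ _ (Fin.le_def.mpr (by simp [hj']; omega))
      rw [hjj, ← hg₂ j' hpj' hj'q x, e₂, ← e₁, hg₁ j' hpj' hj'q x]
      exact ih (by omega) j'.castSucc (by simp [hj']) x (by omega)
  -- backward: for x < j, h j x = (α x).castSucc
  have backward : ∀ d : ℕ, ∀ j : Fin (m+2), (j:ℕ) + d = (q:ℕ)+1 → (p:ℕ) ≤ (j:ℕ) →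
      ∀ x : Fin (m+1), (x:ℕ) < (j:ℕ) → h j x = (α x).castSucc := by
    intro d
    induction d with
    | zero =>
      intro j hjd _ x hx
      have hjq : j = q.succ := Fin.ext (by simp; omega)
      rw [hjq, hq x]
      exact Fin.succAbove_of_castSucc_lt _ _
        (Fin.castSucc_lt_succ_iff.mpr (key₂ x (by omega)))
    | succ i ih =>
      intro j hjd hpj x hx
      set j' : Fin (m+1) := ⟨(j:ℕ), by omega⟩ with hj'
      have hpj' : p ≤ j' := Fin.le_def.mpr hpj
      have hj'q : j' ≤ q := Fin.le_def.mpr (by simp [hj']; omega)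
      have hjj : j = j'.castSucc := Fin.ext (by simp [hj'])
      have e₁ : j'.castSucc.succAbove x = x.castSucc :=
        Fin.succAbove_of_castSucc_lt _ _ (Fin.lt_def.mpr (by simp; omega))
      have e₂ : j'.succ.succAbove x = x.castSucc :=
        Fin.succAbove_of_castSucc_lt _ _ (Fin.lt_def.mpr (by simp [hj']; omega))
      rw [hjj, ← hg₁ j' hpj' hj'q x, e₁, ← e₂, hg₂ j' hpj' hj'q x]
      exact ih j'.succ (by simp [hj']; omega) (by simp [hj']; omega) x (by simp [hj']; omega)
  have Hh : ∀ j : Fin (m + 2), p.castSucc ≤ j → j ≤ q.succ → ∀ x : Fin (m + 1),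
      h j x = if x.castSucc < j then (α x).castSucc else (α x).succ := by
    intro j h₁ h₂ x
    have h₁' : (p:ℕ) ≤ (j:ℕ) := by simpa [Fin.le_def] using h₁
    have h₂' : (j:ℕ) ≤ (q:ℕ)+1 := by simpa [Fin.le_def] using h₂
    by_cases hx : (x:ℕ) < (j:ℕ)
    · rw [if_pos (Fin.lt_def.mpr (by simpa using hx))]
      exact backward ((q:ℕ)+1-(j:ℕ)) j (by omega) h₁' x hx
    · rw [if_neg (by simp [Fin.lt_def]; omega)]
      exact forward (j:ℕ) h₁' h₂' j rfl x (by omega)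
  refine ⟨Hh, ?_⟩
  intro j h₁ h₂ x
  have h₁' : (p:ℕ) ≤ (j:ℕ) := Fin.le_def.mp h₁
  have h₂' : (j:ℕ) ≤ (q:ℕ) := Fin.le_def.mp h₂
  by_cases hx : (x:ℕ) ≤ (j:ℕ)
  · rw [dif_pos hx]
    set x' : Fin (m+1) := ⟨(x:ℕ), by have := j.isLt; omega⟩ with hx'
    have ex : j.succ.succAbove x' = x :=
      Fin.ext (by rw [Fin.succAbove_of_castSucc_lt _ _ (Fin.lt_def.mpr (by simp [hx']; omega))]; simp [hx'])
    rw [← ex, hg₂ j h₁ h₂ x',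
      Hh j.succ (Fin.le_def.mpr (by simp; omega)) (Fin.le_def.mpr (by simp; omega)) x',
      if_pos (Fin.lt_def.mpr (by simp; omega))]
  · rw [dif_neg hx]
    set x' : Fin (m+1) := ⟨(x:ℕ)-1, by have := x.isLt; omega⟩ with hx'
    have ex : j.castSucc.succAbove x' = x :=
      Fin.ext (by rw [Fin.succAbove_of_le_castSucc _ _ (Fin.le_def.mpr (by simp [hx']; omega))]; simp [hx']; omega)
    rw [← ex, hg₁ j h₁ h₂ x',
      Hh j.castSucc (Fin.le_def.mpr (by simp; omega)) (Fin.le_def.mpr (by simp; omega)) x',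
      if_neg (by simp [Fin.lt_def, hx']; omega)]
end
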